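/- In the complete bipartite graph K_{2,n} (n ≥ 1), let u and v be the two vertices in the partite set of size 2. Then adjacency perfect state transfer occurs between u and v at time τ = π/√(2n): exp(iτA)e_u = γe_v for some unimodular γ, where A is the adjacency matrix of K_{2,n}. -/

import Mathlib

/-!
The adjacency matrix `A` of `K_{2,n}` satisfies `A³ = 2n • A`. Whenever `X³ = s² • X` with
`s ≠ 0`, the elements `P± = (X² ± s • X) / (2s²)` are orthogonal idempotents with
`X = s • P₊ - s • P₋`, which gives `exp X = 1 + (sinh s / s) • X + ((cosh s - 1) / s²) • X²`.
For `X = iτA` with `τ = π / √(2n)` we have `s = iπ`, so `U(τ) = 1 - A² / n`; as `u` and `v`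
have the same `n` neighbours, `A² e_u = n (e_u + e_v)`, hence `U(τ) e_u = -e_v`.
-/

open Matrix Complex

/-- The continuous-time quantum walk transition matrix `U(t) = exp(i t M)`. -/
noncomputable def transU {V : Type*} [Fintype V] [DecidableEq V]
    (M : Matrix V V ℝ) (t : ℝ) : Matrix V V ℂ :=
  NormedSpace.exp ((Complex.I * (t : ℂ)) • M.map (fun x => (x : ℂ)))

/-- The adjacency matrix of the complete bipartite graph `K_{2,n}`, with partite
sets `Fin 2` and `Fin n`. -/
def adjK2n (n : ℕ) : Matrix (Fin 2 ⊕ Fin n) (Fin 2 ⊕ Fin n) ℝ :=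
  Matrix.of fun x y =>
    match x, y with
    | Sum.inl _, Sum.inr _ => 1
    | Sum.inr _, Sum.inl _ => 1
    | _, _ => 0

theorem IsIdempotentElem.exp_smul {𝔸 : Type*} [Ring 𝔸] [Algebra ℂ 𝔸] [TopologicalSpace 𝔸]
    [IsTopologicalRing 𝔸] [ContinuousSMul ℂ 𝔸] [T2Space 𝔸] {P : 𝔸} (hP : IsIdempotentElem P)
    (c : ℂ) : NormedSpace.exp (c • P) = 1 + (Complex.exp c - 1) • P := by
  rw [NormedSpace.exp_eq_tsum ℂ]
  refine HasSum.tsum_eq ?_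
  have hterm : (fun k : ℕ => ((k.factorial : ℂ)⁻¹) • (c • P) ^ k) =
      fun k => (c ^ k / k.factorial) • P + if k = 0 then 1 - P else 0 := by
    funext k
    cases k with
    | zero => simp
    | succ k => simp [smul_pow, hP.pow_succ_eq, smul_smul, div_eq_inv_mul]
  have hexp : HasSum (fun k : ℕ => c ^ k / k.factorial) (Complex.exp c) := by
    rw [Complex.exp_eq_exp_ℂ]
    exact NormedSpace.expSeries_div_hasSum_exp c
  rw [hterm]
  convert (hexp.smul_const P).add (hasSum_ite_eq 0 (1 - P)) using 1
  rw [sub_smul, one_smul]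
  abel

theorem NormedSpace.exp_eq_of_pow_three {𝔸 : Type*} [NormedRing 𝔸] [NormedAlgebra ℂ 𝔸]
    [CompleteSpace 𝔸] {X : 𝔸} {s : ℂ} (hs : s ≠ 0) (hX : X ^ 3 = s ^ 2 • X) :
    NormedSpace.exp X =
      1 + (Complex.sinh s / s) • X + ((Complex.cosh s - 1) / s ^ 2) • X ^ 2 := by
  have hX4 : X ^ 4 = s ^ 2 • X ^ 2 := by
    rw [pow_succ, hX, smul_mul_assoc, ← pow_two]
  have hprod (ε η : ℂ) : (X ^ 2 + ε • X) * (X ^ 2 + η • X) =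
      (s ^ 2 + ε * η) • X ^ 2 + ((ε + η) * s ^ 2) • X := by
    simp only [mul_add, add_mul, smul_mul_assoc, mul_smul_comm, ← pow_succ, ← pow_succ',
      ← pow_add, hX, hX4]
    simp only [← pow_two]
    match_scalars <;> ring
  set P : ℂ → 𝔸 := fun ε => (2 * s ^ 2)⁻¹ • (X ^ 2 + ε • X) with hP
  have hidem (ε : ℂ) (hε : ε ^ 2 = s ^ 2) : IsIdempotentElem (P ε) := by
    rw [IsIdempotentElem, hP, smul_mul_smul, hprod, ← sq ε, hε]
    match_scalars <;> field_simp <;> ring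
  have horth (ε : ℂ) (hε : ε ^ 2 = s ^ 2) : P ε * P (-ε) = 0 := by
    rw [hP, smul_mul_smul, hprod, mul_neg, ← sq ε, hε]
    simp
  have hcomm : Commute (P s) (P (-s)) := by
    have h := horth (-s) (neg_sq s)
    rw [neg_neg] at h
    exact (horth s rfl).trans h.symm
  have hdecomp : X = s • P s + (-s) • P (-s) := by
    rw [hP]
    match_scalars <;> field_simp <;> ring
  conv_lhs => rw [hdecomp]
  rw [exp_add_of_commute_of_mem_ball (𝕂 := ℂ) ((hcomm.smul_left s).smul_right (-s))
      (by simp [expSeries_radius_eq_top]) (by simp [expSeries_radius_eq_top]),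
    (hidem s rfl).exp_smul, (hidem (-s) (neg_sq s)).exp_smul]
  simp only [mul_add, add_mul, mul_one, one_mul, smul_mul_smul, horth s rfl, smul_zero, add_zero]
  rw [Complex.sinh, Complex.cosh, hP]
  match_scalars <;> field_simp <;> ring

theorem transU_pi_div_eq_of_pow_three {V : Type*} [Fintype V] [DecidableEq V]
    {M : Matrix V V ℝ} {r : ℝ} (hr : r ≠ 0) (hM : M ^ 3 = r ^ 2 • M) :
    transU M (Real.pi / r) = 1 - (2 / r ^ 2 : ℂ) • (M ^ 2).map (fun x => (x : ℂ)) := by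
  set B := M.map (fun x => (x : ℂ))
  have hmap (k : ℕ) : (M ^ k).map (fun x => (x : ℂ)) = B ^ k := Matrix.map_pow M ofRealHom k
  have hB : B ^ 3 = (r : ℂ) ^ 2 • B := by
    rw [← hmap, hM]
    ext i j
    simp [B]
  have hX : ((I * (Real.pi / r : ℝ)) • B) ^ 3 =
      (Real.pi * I) ^ 2 • ((I * (Real.pi / r : ℝ)) • B) := by
    rw [smul_pow, hB, smul_smul, smul_smul]
    congr 1
    push_cast
    field_simp [hr]
  change NormedSpace.exp ((I * (Real.pi / r : ℝ)) • B) = _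
  open scoped Matrix.Norms.Operator in
  refine (NormedSpace.exp_eq_of_pow_three (by simp [Real.pi_ne_zero]) hX).trans ?_
  rw [sinh_mul_I, cosh_mul_I, ← ofReal_sin, ← ofReal_cos, Real.sin_pi, Real.cos_pi, hmap,
    smul_pow]
  match_scalars <;> field_simp [hr] <;> ring

theorem adjK2n_pow_three (n : ℕ) : adjK2n n ^ 3 = (2 * n : ℝ) • adjK2n n := by
  ext (i | j) (k | l) <;> simp [pow_succ, mul_apply, adjK2n, Fintype.sum_sum_type]
  ring

theorem adjK2n_sq_apply_inl_inl (n : ℕ) (i j : Fin 2) :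
    (adjK2n n ^ 2) (Sum.inl i) (Sum.inl j) = n := by
  simp [sq, mul_apply, adjK2n, Fintype.sum_sum_type]

theorem adjK2n_sq_apply_inr_inl (n : ℕ) (j : Fin n) (i : Fin 2) :
    (adjK2n n ^ 2) (Sum.inr j) (Sum.inl i) = 0 := by
  simp [sq, mul_apply, adjK2n, Fintype.sum_sum_type]

theorem stmt19 (n : ℕ) (hn : 1 ≤ n) :
    ∃ γ : ℂ, ‖γ‖ = 1 ∧
      transU (adjK2n n) (Real.pi / Real.sqrt (2 * n)) *ᵥ
          (Pi.single (Sum.inl 0) 1 : Fin 2 ⊕ Fin n → ℂ) =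
        γ • (Pi.single (Sum.inl 1) 1 : Fin 2 ⊕ Fin n → ℂ) := by
  have h2n : (0 : ℝ) < 2 * n := by positivity
  have hA : adjK2n n ^ 3 = Real.sqrt (2 * n) ^ 2 • adjK2n n := by
    rw [Real.sq_sqrt h2n.le, adjK2n_pow_three]
  refine ⟨-1, by simp, ?_⟩
  rw [transU_pi_div_eq_of_pow_three (Real.sqrt_pos.2 h2n).ne' hA, ← ofReal_pow,
    Real.sq_sqrt h2n.le, sub_mulVec, one_mulVec, smul_mulVec, mulVec_single]
  ext (i | j)
  · have hn0 : (n : ℂ) ≠ 0 := Nat.cast_ne_zero.2 (by omega)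
    have hcoef : (2 : ℂ) / (2 * n) * n = 1 := by field_simp
    fin_cases i <;> simp [adjK2n_sq_apply_inl_inl, hcoef]
  · simp [adjK2n_sq_apply_inr_inl]
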